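/- Fix reals L1 < L2 and let a : ℝ → ℝ be Lipschitz continuous and attain its maximum over [L1,L2] at an interior point of (L1,L2). Then λ_p((L1,L2), d, a) is strictly decreasing in the diffusion rate d: if 0 < d2 < d1, then λ_p((L1,L2), d1, a) < λ_p((L1,L2), d2, a). -/

import Mathlib

open MeasureTheory Set Filter Topology

noncomputable section

def KernelJ (J : ℝ → ℝ) : Prop :=
  Continuous J ∧ (∀ x, 0 ≤ J x) ∧ (∃ C, ∀ x, J x ≤ C) ∧
    (∀ x, J (-x) = J x) ∧ 0 < J 0 ∧ (∫ x : ℝ, J x) = 1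

/-- The generalized principal eigenvalue of the nonlocal operator
`d∫_{L1}^{L2} J(x-y)φ(y)dy - dφ(x) + a(x)φ(x)` on `(L1, L2)`. -/
def lambdaP (J : ℝ → ℝ) (L1 L2 d : ℝ) (a : ℝ → ℝ) : ℝ :=
  sInf {lam : ℝ | ∃ φ : ℝ → ℝ, ContinuousOn φ (Icc L1 L2) ∧
    (∀ x ∈ Icc L1 L2, 0 < φ x) ∧
    ∀ x ∈ Ioo L1 L2,
      d * (∫ y in L1..L2, J (x - y) * φ y) - d * φ x + a x * φ x ≤ lam * φ x}

/-!
Write `K` for the convolution with `J` restricted to `[L1, L2]` and `Q(u) = ⟨u, K u⟩`.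
A positive test function for the level `λ` at diffusion `d` gives, through the ground state
transform, `d Q(u) ≤ ∫ (λ + d - a) u²`. Conversely, a bound `d Q(u) ≤ ∫ (m - a) u²` with
`m ≥ max a` makes `v ↦ d K v / (m + ε - a)` a contraction of a weighted `L²`, and its Neumann
series is a test function for `m + ε - d`; hence `λ_p(d) ≤ m - d`.
The kernel has a spectral gap, `Q(u) ≤ k ‖u‖²` with `k < 1`. Combining the two directions,
raising the diffusion from `d₂` to `d₁` lowers `λ_p` by at least `(d₁ - d₂)(1 - k)`, unless
`λ_p(d₁)` is at most `max a - d₁`; but `max a - d₂ ≤ λ_p(d₂)` because `a` attains its maximum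
inside the interval.
-/

namespace KernelJ

variable {J : ℝ → ℝ}

theorem continuous (hJ : KernelJ J) : Continuous J := hJ.1

theorem nonneg (hJ : KernelJ J) (x : ℝ) : 0 ≤ J x := hJ.2.1 x

theorem exists_le (hJ : KernelJ J) : ∃ C, ∀ x, J x ≤ C := hJ.2.2.1

theorem integral_eq_one (hJ : KernelJ J) : ∫ x, J x = 1 := hJ.2.2.2.2.2

theorem integrable (hJ : KernelJ J) : Integrable J := by
  by_contra h
  have := hJ.integral_eq_one
  rw [integral_undef h] at this
  exact zero_ne_one this

theorem apply_sub_comm (hJ : KernelJ J) (x y : ℝ) : J (x - y) = J (y - x) := by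
  obtain ⟨-, -, -, hsymm, -, -⟩ := hJ
  rw [← neg_sub, hsymm]

theorem exists_pos_le (hJ : KernelJ J) : ∃ j > 0, ∃ δ > 0, ∀ z, |z| ≤ δ → j ≤ J z := by
  obtain ⟨hcont, -, -, -, hJ0, -⟩ := hJ
  obtain ⟨ε, hε, hball⟩ := Metric.mem_nhds_iff.1
    (hcont.continuousAt.preimage_mem_nhds (Ioi_mem_nhds (half_lt_self hJ0)))
  refine ⟨J 0 / 2, half_pos hJ0, ε / 2, half_pos hε, fun z hz => le_of_lt (hball ?_)⟩
  show z ∈ Metric.ball 0 ε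
  rw [Metric.mem_ball, Real.dist_eq, sub_zero]
  linarith

end KernelJ

namespace NonlocalDispersal

section CauchySchwarz

variable {α : Type*} [MeasurableSpace α] {μ : Measure α} {f g : α → ℝ}

theorem integral_mul_sq_le (hf : Integrable (fun x => f x ^ 2) μ)
    (hg : Integrable (fun x => g x ^ 2) μ) (hfg : Integrable (fun x => f x * g x) μ) :
    (∫ x, f x * g x ∂μ) ^ 2 ≤ (∫ x, f x ^ 2 ∂μ) * ∫ x, g x ^ 2 ∂μ := by
  have hquad : ∀ t : ℝ, 0 ≤ (∫ x, g x ^ 2 ∂μ) * (t * t) + 2 * (∫ x, f x * g x ∂μ) * t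
      + ∫ x, f x ^ 2 ∂μ := fun t => by
    have hrest : Integrable (fun x => 2 * t * (f x * g x) + f x ^ 2) μ :=
      (hfg.const_mul _).add hf
    have h : 0 ≤ ∫ x, (t * t * g x ^ 2 + (2 * t * (f x * g x) + f x ^ 2)) ∂μ :=
      integral_nonneg fun x => by simp only [Pi.zero_apply]; nlinarith [sq_nonneg (t * g x + f x)]
    rw [integral_add (hg.const_mul _) hrest, integral_add (hfg.const_mul _) hf,
      integral_const_mul, integral_const_mul] at h
    linarith
  have := discrim_le_zero hquad
  rw [discrim] at this
  nlinarith

theorem sqrt_integral_add_sq_le (hf : Integrable (fun x => f x ^ 2) μ)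
    (hg : Integrable (fun x => g x ^ 2) μ) (hfg : Integrable (fun x => f x * g x) μ) :
    √(∫ x, (f x + g x) ^ 2 ∂μ) ≤ √(∫ x, f x ^ 2 ∂μ) + √(∫ x, g x ^ 2 ∂μ) := by
  have hF : 0 ≤ ∫ x, f x ^ 2 ∂μ := integral_nonneg fun x => sq_nonneg (f x)
  have hG : 0 ≤ ∫ x, g x ^ 2 ∂μ := integral_nonneg fun x => sq_nonneg (g x)
  have hcross : ∫ x, f x * g x ∂μ ≤ √(∫ x, f x ^ 2 ∂μ) * √(∫ x, g x ^ 2 ∂μ) := by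
    rw [← Real.sqrt_mul hF]
    exact Real.le_sqrt_of_sq_le (integral_mul_sq_le hf hg hfg)
  have hexpand : ∫ x, (f x + g x) ^ 2 ∂μ
      = ∫ x, f x ^ 2 ∂μ + 2 * ∫ x, f x * g x ∂μ + ∫ x, g x ^ 2 ∂μ := by
    have hfirst : Integrable (fun x => f x ^ 2 + 2 * (f x * g x)) μ := hf.add (hfg.const_mul 2)
    rw [← integral_const_mul, ← integral_add hf (hfg.const_mul 2), ← integral_add hfirst hg]
    exact integral_congr_ae (Eventually.of_forall fun x => by ring)
  rw [Real.sqrt_le_left (by positivity), hexpand, add_sq, Real.sq_sqrt hF, Real.sq_sqrt hG]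
  linarith

end CauchySchwarz

section Translation

variable {u : ℝ → ℝ}

def shiftDefect (u : ℝ → ℝ) (b : ℝ) : ℝ := ∫ x, (u x - u (x - b)) ^ 2

theorem memLp_comp_sub_right (hu : MemLp u 2) (b : ℝ) : MemLp (fun x => u (x - b)) 2 :=
  hu.comp_measurePreserving (measurePreserving_sub_right volume b)

theorem shiftDefect_nonneg (b : ℝ) : 0 ≤ shiftDefect u b :=
  integral_nonneg fun _ => sq_nonneg _

theorem shiftDefect_eq (hu : MemLp u 2) (b : ℝ) :
    shiftDefect u b = 2 * (∫ x, u x ^ 2) - 2 * ∫ x, u x * u (x - b) := by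
  have hb := memLp_comp_sub_right hu b
  have hprod : Integrable (fun x => u x * u (x - b)) := hu.integrable_mul hb
  have hfirst : Integrable (fun x => u x ^ 2 - 2 * (u x * u (x - b))) :=
    hu.integrable_sq.sub (hprod.const_mul 2)
  have htrans : ∫ x, u (x - b) ^ 2 = ∫ x, u x ^ 2 := integral_sub_right_eq_self (u · ^ 2) b
  have hexpand : shiftDefect u b
      = (∫ x, u x ^ 2) - 2 * (∫ x, u x * u (x - b)) + ∫ x, u (x - b) ^ 2 := by
    rw [← integral_const_mul, ← integral_sub hu.integrable_sq (hprod.const_mul 2),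
      ← integral_add hfirst hb.integrable_sq]
    exact integral_congr_ae (Eventually.of_forall fun x => by ring)
  rw [hexpand, htrans]
  ring

theorem sqrt_shiftDefect_add_le (hu : MemLp u 2) (b c : ℝ) :
    √(shiftDefect u (b + c)) ≤ √(shiftDefect u b) + √(shiftDefect u c) := by
  have hdiff : ∀ s t, MemLp (fun x => u (x - s) - u (x - t)) 2 := fun s t =>
    (memLp_comp_sub_right hu s).sub (memLp_comp_sub_right hu t)
  have htrans : shiftDefect u c = ∫ x, (u (x - b) - u (x - (b + c))) ^ 2 := by
    rw [shiftDefect, ← integral_sub_right_eq_self _ b]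
    simp only [sub_sub]
  have h := sqrt_integral_add_sq_le (μ := volume) (hdiff 0 b).integrable_sq
    (hdiff b (b + c)).integrable_sq ((hdiff 0 b).integrable_mul (hdiff b (b + c)))
  simp only [sub_zero, sub_add_sub_cancel] at h
  rwa [shiftDefect, shiftDefect, htrans]

theorem sqrt_shiftDefect_nat_mul_le (hu : MemLp u 2) (n : ℕ) (b : ℝ) :
    √(shiftDefect u (n * b)) ≤ n * √(shiftDefect u b) := by
  induction n with
  | zero => simp [shiftDefect]
  | succ n ih =>
    calc √(shiftDefect u ((n + 1 : ℕ) * b)) ≤ √(shiftDefect u (n * b)) + √(shiftDefect u b) := by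
          rw [Nat.cast_succ, add_mul, one_mul]; exact sqrt_shiftDefect_add_le hu _ _
      _ ≤ (n + 1 : ℕ) * √(shiftDefect u b) := by push_cast; linarith

end Translation

def kernelOp (J : ℝ → ℝ) (L1 L2 : ℝ) (f : ℝ → ℝ) (x : ℝ) : ℝ :=
  ∫ y in Icc L1 L2, J (x - y) * f y

def kernelForm (J : ℝ → ℝ) (L1 L2 : ℝ) (f g : ℝ → ℝ) : ℝ :=
  ∫ x in Icc L1 L2, f x * kernelOp J L1 L2 g x

section KernelOp

variable {J : ℝ → ℝ} {L1 L2 : ℝ} {f g : ℝ → ℝ}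

theorem intervalIntegral_eq_kernelOp (hL : L1 ≤ L2) (f : ℝ → ℝ) (x : ℝ) :
    ∫ y in L1..L2, J (x - y) * f y = kernelOp J L1 L2 f x := by
  rw [intervalIntegral.integral_of_le hL, ← integral_Icc_eq_integral_Ioc]
  rfl

theorem kernelOp_congr (h : EqOn f g (Icc L1 L2)) (x : ℝ) :
    kernelOp J L1 L2 f x = kernelOp J L1 L2 g x :=
  setIntegral_congr_fun measurableSet_Icc fun y hy => by rw [h hy]

theorem kernelOp_nonneg (hJ : KernelJ J) (hf : ∀ y ∈ Icc L1 L2, 0 ≤ f y) (x : ℝ) :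
    0 ≤ kernelOp J L1 L2 f x :=
  setIntegral_nonneg measurableSet_Icc fun y hy => mul_nonneg (hJ.nonneg _) (hf y hy)

theorem kernelOp_one_le (hJ : KernelJ J) (x : ℝ) : kernelOp J L1 L2 (fun _ => 1) x ≤ 1 := by
  have hshift : ∫ y, J (x - y) = 1 := by
    rw [integral_sub_left_eq_self J volume x, hJ.integral_eq_one]
  simp only [kernelOp, mul_one]
  exact hshift ▸ setIntegral_le_integral (hJ.integrable.comp_sub_left x)
    (Eventually.of_forall fun y => hJ.nonneg _)

theorem continuous_kernel_mul (hJ : KernelJ J) (hf : Continuous f) :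
    Continuous fun p : ℝ × ℝ => J (p.1 - p.2) * f p.2 := by
  have := hJ.continuous
  fun_prop

theorem integrableOn_kernel_mul (hJ : KernelJ J) (hf : Continuous f) (x : ℝ) :
    IntegrableOn (fun y => J (x - y) * f y) (Icc L1 L2) :=
  ((continuous_kernel_mul hJ hf).comp (Continuous.prodMk_right x)).integrableOn_Icc

theorem continuous_kernelOp (hJ : KernelJ J) (hf : Continuous f) :
    Continuous (kernelOp J L1 L2 f) :=
  continuous_parametric_integral_of_continuous (f := fun x y => J (x - y) * f y)
    (continuous_kernel_mul hJ hf) isCompact_Icc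

theorem kernelOp_add (hJ : KernelJ J) (hf : Continuous f) (hg : Continuous g) (x : ℝ) :
    kernelOp J L1 L2 (fun y => f y + g y) x = kernelOp J L1 L2 f x + kernelOp J L1 L2 g x := by
  simp only [kernelOp, mul_add]
  exact integral_add (integrableOn_kernel_mul hJ hf x) (integrableOn_kernel_mul hJ hg x)

theorem kernelOp_sub (hJ : KernelJ J) (hf : Continuous f) (hg : Continuous g) (x : ℝ) :
    kernelOp J L1 L2 (fun y => f y - g y) x = kernelOp J L1 L2 f x - kernelOp J L1 L2 g x := by
  simp only [kernelOp, mul_sub]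
  exact integral_sub (integrableOn_kernel_mul hJ hf x) (integrableOn_kernel_mul hJ hg x)

theorem abs_kernelOp_le (hJ : KernelJ J) (f : ℝ → ℝ) (x : ℝ) :
    |kernelOp J L1 L2 f x| ≤ kernelOp J L1 L2 (fun y => |f y|) x := by
  refine (abs_integral_le_integral_abs).trans_eq ?_
  simp only [kernelOp, abs_mul, abs_of_nonneg (hJ.nonneg _)]

theorem kernelOp_abs_le {C : ℝ} (hJ : KernelJ J) (hC : ∀ z, J z ≤ C) (hf : Continuous f)
    (x : ℝ) : kernelOp J L1 L2 (fun y => |f y|) x ≤ C * ∫ y in Icc L1 L2, |f y| := by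
  rw [← integral_const_mul]
  exact setIntegral_mono_on (integrableOn_kernel_mul hJ hf.abs x)
    (continuous_const.mul hf.abs).integrableOn_Icc measurableSet_Icc
    fun y _ => mul_le_mul_of_nonneg_right (hC _) (abs_nonneg _)

theorem integrableOn_mul_kernelOp (hJ : KernelJ J) (hf : Continuous f) (hg : Continuous g) :
    IntegrableOn (fun x => f x * kernelOp J L1 L2 g x) (Icc L1 L2) :=
  (hf.mul (continuous_kernelOp hJ hg)).integrableOn_Icc

theorem kernelForm_const_mul (t : ℝ) (f g : ℝ → ℝ) :
    kernelForm J L1 L2 (fun x => t * f x) g = t * kernelForm J L1 L2 f g := by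
  rw [kernelForm, kernelForm, ← integral_const_mul]
  congr 1 with x
  ring

theorem kernelForm_comm (hJ : KernelJ J) (hf : Continuous f) (hg : Continuous g) :
    kernelForm J L1 L2 f g = kernelForm J L1 L2 g f := by
  have hint : Integrable (Function.uncurry fun x y => f x * (J (x - y) * g y))
      ((volume.restrict (Icc L1 L2)).prod (volume.restrict (Icc L1 L2))) := by
    rw [Measure.prod_restrict]
    refine ContinuousOn.integrableOn_compact (isCompact_Icc.prod isCompact_Icc) ?_
    exact ((hf.comp continuous_fst).mul (continuous_kernel_mul hJ hg)).continuousOn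
  calc kernelForm J L1 L2 f g
      = ∫ x in Icc L1 L2, ∫ y in Icc L1 L2, f x * (J (x - y) * g y) := by
        simp only [kernelForm, kernelOp, integral_const_mul]
    _ = ∫ y in Icc L1 L2, ∫ x in Icc L1 L2, f x * (J (x - y) * g y) :=
        integral_integral_swap hint
    _ = kernelForm J L1 L2 g f := by
        simp only [kernelForm, kernelOp, ← integral_const_mul]
        refine setIntegral_congr_fun measurableSet_Icc fun y _ =>
          setIntegral_congr_fun measurableSet_Icc fun x _ => ?_
        rw [hJ.apply_sub_comm]
        ring

theorem abs_kernelForm_self_le (hJ : KernelJ J) (hf : Continuous f) :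
    |kernelForm J L1 L2 f f| ≤ kernelForm J L1 L2 (fun x => |f x|) (fun x => |f x|) := by
  refine abs_integral_le_integral_abs.trans (setIntegral_mono_on
    (integrableOn_mul_kernelOp hJ hf hf).abs (integrableOn_mul_kernelOp hJ hf.abs hf.abs)
    measurableSet_Icc fun x _ => ?_)
  rw [abs_mul]
  exact mul_le_mul_of_nonneg_left (abs_kernelOp_le hJ f x) (abs_nonneg _)

theorem kernelForm_add_self_sub_kernelForm_sub_self (hJ : KernelJ J) (hf : Continuous f)
    (hg : Continuous g) :
    kernelForm J L1 L2 (fun x => f x + g x) (fun x => f x + g x)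
      - kernelForm J L1 L2 (fun x => f x - g x) (fun x => f x - g x)
      = 4 * kernelForm J L1 L2 f g := by
  have hadd : Continuous fun x => f x + g x := hf.add hg
  have hsub : Continuous fun x => f x - g x := hf.sub hg
  have hsum : kernelForm J L1 L2 (fun x => f x + g x) (fun x => f x + g x)
      - kernelForm J L1 L2 (fun x => f x - g x) (fun x => f x - g x)
      = 2 * kernelForm J L1 L2 f g + 2 * kernelForm J L1 L2 g f := by
    simp only [kernelForm, ← integral_const_mul]
    rw [← integral_sub (integrableOn_mul_kernelOp hJ hadd hadd)
        (integrableOn_mul_kernelOp hJ hsub hsub),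
      ← integral_add ((integrableOn_mul_kernelOp hJ hf hg).const_mul 2)
        ((integrableOn_mul_kernelOp hJ hg hf).const_mul 2)]
    refine setIntegral_congr_fun measurableSet_Icc fun x _ => ?_
    simp only [kernelOp_add hJ hf hg, kernelOp_sub hJ hf hg]
    ring
  rw [hsum, kernelForm_comm hJ hg hf]
  ring

end KernelOp

section SpectralGap

variable {J : ℝ → ℝ} {L1 L2 : ℝ} {u f : ℝ → ℝ}

theorem shiftDefect_eq_of_support (hu : MemLp u 2) (hsupp : ∀ x ∉ Icc L1 L2, u x = 0) {b : ℝ}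
    (hb : L2 - L1 < b) : shiftDefect u b = 2 * ∫ x, u x ^ 2 := by
  have hdisj : ∀ x, u x * u (x - b) = 0 := fun x => by
    by_cases hx : x ∈ Icc L1 L2
    · rw [hsupp (x - b) fun h => by linarith [hx.2, h.1], mul_zero]
    · rw [hsupp x hx, zero_mul]
  simp only [shiftDefect_eq hu, hdisj, integral_zero, mul_zero, sub_zero]

theorem two_mul_integral_sq_le_shiftDefect (hu : MemLp u 2) (hsupp : ∀ x ∉ Icc L1 L2, u x = 0)
    {n : ℕ} {b : ℝ} (hb : L2 - L1 < n * b) : 2 * ∫ x, u x ^ 2 ≤ n ^ 2 * shiftDefect u b := by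
  have h := sqrt_shiftDefect_nat_mul_le hu n b
  rw [shiftDefect_eq_of_support hu hsupp hb] at h
  have h2 := pow_le_pow_left₀ (Real.sqrt_nonneg _) h 2
  rwa [Real.sq_sqrt (by positivity), mul_pow, Real.sq_sqrt (shiftDefect_nonneg b)] at h2

theorem exists_abs_indicator_Icc_le (hf : Continuous f) :
    ∃ C, ∀ x, |(Icc L1 L2).indicator f x| ≤ C := by
  obtain ⟨C, hC⟩ := isCompact_Icc.exists_bound_of_continuousOn (hf.continuousOn (s := Icc L1 L2))
  refine ⟨max C 0, fun x => ?_⟩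
  by_cases hx : x ∈ Icc L1 L2
  · rw [indicator_of_mem hx]; exact (hC x hx).trans (le_max_left _ _)
  · rw [indicator_of_notMem hx, abs_zero]; exact le_max_right _ _

theorem memLp_indicator_Icc (hf : Continuous f) : MemLp ((Icc L1 L2).indicator f) 2 := by
  obtain ⟨C, hC⟩ := exists_abs_indicator_Icc_le (L1 := L1) (L2 := L2) hf
  exact HasCompactSupport.memLp_of_bound
    (HasCompactSupport.intro isCompact_Icc fun x hx => indicator_of_notMem hx f)
    (hf.measurable.indicator measurableSet_Icc).aestronglyMeasurable C
    (Eventually.of_forall fun x => hC x)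

theorem integrable_autocorrelation_prod (hJ : KernelJ J) (hf : Continuous f) :
    Integrable (Function.uncurry fun z x =>
        J z * ((Icc L1 L2).indicator f x * (Icc L1 L2).indicator f (x - z)))
      (volume.prod volume) := by
  set u := (Icc L1 L2).indicator f
  obtain ⟨C, hC⟩ := exists_abs_indicator_Icc_le (L1 := L1) (L2 := L2) hf
  have hone : Integrable ((Icc L1 L2).indicator fun _ => C ^ 2) :=
    (integrable_indicator_iff measurableSet_Icc).2 (integrableOn_const (by simp))
  have hu : Measurable u := hf.measurable.indicator measurableSet_Icc
  refine (hJ.integrable.mul_prod hone).mono' ?_ (Eventually.of_forall fun ⟨z, x⟩ => ?_)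
  · exact ((hJ.continuous.measurable.comp measurable_fst).mul ((hu.comp measurable_snd).mul
      (hu.comp (measurable_snd.sub measurable_fst)))).aestronglyMeasurable
  · rw [Function.uncurry_apply_pair, Real.norm_eq_abs, abs_mul, abs_of_nonneg (hJ.nonneg _),
      abs_mul]
    refine mul_le_mul_of_nonneg_left ?_ (hJ.nonneg _)
    by_cases hx : x ∈ Icc L1 L2
    · rw [indicator_of_mem hx, sq]
      exact mul_le_mul (hC _) (hC _) (abs_nonneg _) ((abs_nonneg _).trans (hC 0))
    · simp [u, indicator_of_notMem hx]

theorem kernelForm_self_eq_integral_autocorrelation (hJ : KernelJ J) (hf : Continuous f) :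
    kernelForm J L1 L2 f f = ∫ z, J z *
      ∫ x, (Icc L1 L2).indicator f x * (Icc L1 L2).indicator f (x - z) := by
  set u := (Icc L1 L2).indicator f
  have hinner : ∀ x, ∫ z, J z * (u x * u (x - z)) = u x * kernelOp J L1 L2 f x := fun x => by
    calc ∫ z, J z * (u x * u (x - z)) = u x * ∫ z, J (x - (x - z)) * u (x - z) := by
          rw [← integral_const_mul]
          exact integral_congr_ae (Eventually.of_forall fun z => by
            simp only [sub_sub_cancel]; ring)
      _ = u x * ∫ y, J (x - y) * u y := by
          rw [integral_sub_left_eq_self (fun y => J (x - y) * u y)]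
      _ = u x * kernelOp J L1 L2 f x := by
          rw [kernelOp, ← integral_indicator measurableSet_Icc]
          congr 2 with y
          by_cases hy : y ∈ Icc L1 L2 <;> simp [u, hy]
  calc kernelForm J L1 L2 f f = ∫ x, u x * kernelOp J L1 L2 f x := by
        rw [kernelForm, ← integral_indicator measurableSet_Icc]
        congr 1 with x
        by_cases hx : x ∈ Icc L1 L2 <;> simp [u, hx]
    _ = ∫ x, ∫ z, J z * (u x * u (x - z)) := by simp only [hinner]
    _ = ∫ z, ∫ x, J z * (u x * u (x - z)) :=
        (integral_integral_swap (integrable_autocorrelation_prod hJ hf)).symm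
    _ = ∫ z, J z * ∫ x, u x * u (x - z) := by simp only [integral_const_mul]

theorem integrable_mul_shiftDefect (hJ : KernelJ J) (hf : Continuous f) :
    Integrable fun z => J z * shiftDefect ((Icc L1 L2).indicator f) z := by
  have hu := memLp_indicator_Icc (L1 := L1) (L2 := L2) hf
  set u := (Icc L1 L2).indicator f
  have hcorr : Integrable fun z => J z * ∫ x, u x * u (x - z) :=
    (integrable_autocorrelation_prod (L1 := L1) (L2 := L2) hJ hf).integral_prod_left.congr
      (Eventually.of_forall fun z => integral_const_mul (J z) _)
  refine ((hJ.integrable.const_mul (2 * ∫ x, u x ^ 2)).sub (hcorr.const_mul 2)).congr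
    (Eventually.of_forall fun z => ?_)
  dsimp only [Pi.sub_apply]
  rw [shiftDefect_eq hu]
  ring

theorem kernelForm_self_eq_sub (hJ : KernelJ J) (hf : Continuous f) :
    kernelForm J L1 L2 f f = (∫ x, (Icc L1 L2).indicator f x ^ 2)
      - (∫ z, J z * shiftDefect ((Icc L1 L2).indicator f) z) / 2 := by
  set u := (Icc L1 L2).indicator f
  have hdefect : ∀ z, J z * ∫ x, u x * u (x - z) = (∫ x, u x ^ 2) * J z
      - J z * shiftDefect u z / 2 := fun z => by
    rw [shiftDefect_eq (memLp_indicator_Icc hf)]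
    ring
  rw [kernelForm_self_eq_integral_autocorrelation hJ hf,
    integral_congr_ae (Eventually.of_forall hdefect),
    integral_sub (hJ.integrable.const_mul _) ((integrable_mul_shiftDefect hJ hf).div_const 2),
    integral_const_mul, hJ.integral_eq_one, integral_div, mul_one]

theorem mul_integral_sq_le_integral_mul_shiftDefect (hJ : KernelJ J) {j δ : ℝ} (hδ : 0 ≤ δ)
    (hJj : ∀ z, |z| ≤ δ → j ≤ J z) {N : ℕ} (hN : L2 - L1 < N * (δ / 2)) (hf : Continuous f) :
    j * δ * ∫ x, (Icc L1 L2).indicator f x ^ 2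
      ≤ N ^ 2 * ∫ z, J z * shiftDefect ((Icc L1 L2).indicator f) z := by
  have hu := memLp_indicator_Icc (L1 := L1) (L2 := L2) hf
  have hint := integrable_mul_shiftDefect (L1 := L1) (L2 := L2) hJ hf
  set u := (Icc L1 L2).indicator f
  have hu2 : 0 ≤ ∫ x, u x ^ 2 := integral_nonneg fun x => sq_nonneg (u x)
  have hpoint : ∀ z ∈ Icc (δ / 2) δ, j * (2 * ∫ x, u x ^ 2) ≤ N ^ 2 * (J z * shiftDefect u z) :=
    fun z hz => by
      have hJz : j ≤ J z := hJj z (by rw [abs_of_nonneg (by linarith [hz.1])]; exact hz.2)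
      have hgap := two_mul_integral_sq_le_shiftDefect hu (fun x hx => indicator_of_notMem hx f)
        (n := N) (b := z) (by nlinarith [hz.1, N.cast_nonneg (α := ℝ)])
      calc j * (2 * ∫ x, u x ^ 2) ≤ J z * (N ^ 2 * shiftDefect u z) :=
            mul_le_mul hJz hgap (by positivity) (hJ.nonneg z)
        _ = _ := by ring
  calc j * δ * ∫ x, u x ^ 2 = ∫ z in Icc (δ / 2) δ, j * (2 * ∫ x, u x ^ 2) := by
        rw [setIntegral_const, Real.volume_real_Icc_of_le (by linarith), smul_eq_mul]
        ring
    _ ≤ ∫ z in Icc (δ / 2) δ, (N : ℝ) ^ 2 * (J z * shiftDefect u z) :=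
        setIntegral_mono_on (integrableOn_const (by simp)) (hint.const_mul _).integrableOn
          measurableSet_Icc hpoint
    _ ≤ N ^ 2 * ∫ z, J z * shiftDefect u z := by
        rw [integral_const_mul]
        exact mul_le_mul_of_nonneg_left (setIntegral_le_integral hint (Eventually.of_forall
          fun z => mul_nonneg (hJ.nonneg z) (shiftDefect_nonneg z))) (by positivity)

/-- The gap comes from the translates of `f` by shifts in `[δ/2, δ]`, where `J` is bounded
below, staying uniformly far from `f` in `L²`. -/
theorem exists_kernelForm_self_le (hJ : KernelJ J) :
    ∃ k < 1, ∀ f : ℝ → ℝ, Continuous f →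
      kernelForm J L1 L2 f f ≤ k * ∫ x in Icc L1 L2, f x ^ 2 := by
  obtain ⟨j, hj, δ, hδ, hJj⟩ := hJ.exists_pos_le
  obtain ⟨N, hN⟩ := exists_nat_gt ((L2 - L1) / (δ / 2))
  have hN' : L2 - L1 < (N + 1 : ℕ) * (δ / 2) := by
    rw [div_lt_iff₀ (by positivity)] at hN
    push_cast
    linarith
  have hgap : 0 < j * δ / (2 * (N + 1 : ℕ) ^ 2) := by positivity
  refine ⟨1 - j * δ / (2 * (N + 1 : ℕ) ^ 2), by linarith, fun f hf => ?_⟩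
  have hlower := mul_integral_sq_le_integral_mul_shiftDefect hJ hδ.le hJj hN' hf
  have hsq : ∫ x, (Icc L1 L2).indicator f x ^ 2 = ∫ x in Icc L1 L2, f x ^ 2 := by
    rw [← integral_indicator measurableSet_Icc]
    congr 1 with x
    by_cases hx : x ∈ Icc L1 L2 <;> simp [hx]
  have hcontract : j * δ / (2 * (N + 1 : ℕ) ^ 2) * ∫ x, (Icc L1 L2).indicator f x ^ 2
      ≤ (∫ z, J z * shiftDefect ((Icc L1 L2).indicator f) z) / 2 := by
    rw [div_mul_eq_mul_div, div_le_div_iff₀ (by positivity) two_pos]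
    nlinarith
  rw [kernelForm_self_eq_sub hJ hf, ← hsq]
  linarith

end SpectralGap

def admissibleSet (J : ℝ → ℝ) (L1 L2 d : ℝ) (a : ℝ → ℝ) : Set ℝ :=
  {lam : ℝ | ∃ φ : ℝ → ℝ, ContinuousOn φ (Icc L1 L2) ∧
    (∀ x ∈ Icc L1 L2, 0 < φ x) ∧
    ∀ x ∈ Ioo L1 L2,
      d * (∫ y in L1..L2, J (x - y) * φ y) - d * φ x + a x * φ x ≤ lam * φ x}

theorem lambdaP_eq_sInf (J : ℝ → ℝ) (L1 L2 d : ℝ) (a : ℝ → ℝ) :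
    lambdaP J L1 L2 d a = sInf (admissibleSet J L1 L2 d a) := rfl

section GroundState

variable {J : ℝ → ℝ} {L1 L2 : ℝ} {ψ c u : ℝ → ℝ}

theorem kernelForm_self_le_of_kernelOp_le (hJ : KernelJ J) (hψ : Continuous ψ)
    (hψpos : ∀ x, 0 < ψ x) (hc : Continuous c)
    (hsuper : ∀ x ∈ Icc L1 L2, kernelOp J L1 L2 ψ x ≤ c x * ψ x) (hu : Continuous u) :
    kernelForm J L1 L2 u u ≤ ∫ x in Icc L1 L2, c x * u x ^ 2 := by
  set v : ℝ → ℝ := fun x => u x ^ 2 / ψ x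
  have hv : Continuous v := (hu.pow 2).div hψ fun x => (hψpos x).ne'
  -- the ground state transform, in pointwise AM-GM form
  have hamgm : ∀ x y, 2 * (u x * (J (x - y) * u y))
      ≤ v x * (J (x - y) * ψ y) + ψ x * (J (x - y) * v y) := fun x y => by
    have hx := hψpos x
    have hy := hψpos y
    have key : 2 * u x * u y ≤ u x ^ 2 / ψ x * ψ y + ψ x * (u y ^ 2 / ψ y) := by
      rw [div_mul_eq_mul_div, mul_div_assoc', div_add_div _ _ hx.ne' hy.ne',
        le_div_iff₀ (by positivity)]
      nlinarith [sq_nonneg (u x * ψ y - u y * ψ x), mul_pos hx hy]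
    have hJxy := hJ.nonneg (x - y)
    simp only [v]
    nlinarith
  have hinner : ∀ x, 2 * (u x * kernelOp J L1 L2 u x)
      ≤ v x * kernelOp J L1 L2 ψ x + ψ x * kernelOp J L1 L2 v x := fun x => by
    simp only [kernelOp, ← integral_const_mul]
    rw [← integral_add ((integrableOn_kernel_mul hJ hψ x).const_mul _)
      ((integrableOn_kernel_mul hJ hv x).const_mul _)]
    exact setIntegral_mono_on (((integrableOn_kernel_mul hJ hu x).const_mul _).const_mul _)
      (((integrableOn_kernel_mul hJ hψ x).const_mul _).add
        ((integrableOn_kernel_mul hJ hv x).const_mul _)) measurableSet_Icc fun y _ => hamgm x y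
  have hform : 2 * kernelForm J L1 L2 u u ≤ 2 * kernelForm J L1 L2 v ψ := by
    calc 2 * kernelForm J L1 L2 u u
        ≤ kernelForm J L1 L2 v ψ + kernelForm J L1 L2 ψ v := by
          rw [kernelForm, kernelForm, kernelForm, ← integral_const_mul,
            ← integral_add (integrableOn_mul_kernelOp hJ hv hψ)
              (integrableOn_mul_kernelOp hJ hψ hv)]
          exact setIntegral_mono_on ((integrableOn_mul_kernelOp hJ hu hu).const_mul 2)
            ((integrableOn_mul_kernelOp hJ hv hψ).add (integrableOn_mul_kernelOp hJ hψ hv))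
            measurableSet_Icc fun x _ => hinner x
      _ = 2 * kernelForm J L1 L2 v ψ := by rw [kernelForm_comm hJ hψ hv]; ring
  refine (le_of_mul_le_mul_left hform two_pos).trans (setIntegral_mono_on
    (integrableOn_mul_kernelOp hJ hv hψ) (hc.mul (hu.pow 2)).integrableOn_Icc measurableSet_Icc
    fun x hx => ?_)
  calc v x * kernelOp J L1 L2 ψ x ≤ v x * (c x * ψ x) :=
        mul_le_mul_of_nonneg_left (hsuper x hx) (div_nonneg (sq_nonneg _) (hψpos x).le)
    _ = c x * u x ^ 2 := by simp only [v]; field_simp [(hψpos x).ne']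

end GroundState

section Admissible

variable {J : ℝ → ℝ} {L1 L2 d lam : ℝ} {a : ℝ → ℝ}

theorem sub_le_of_mem_admissibleSet (hJ : KernelJ J) (hL : L1 ≤ L2) (hd : 0 ≤ d)
    (hlam : lam ∈ admissibleSet J L1 L2 d a) {x : ℝ} (hx : x ∈ Ioo L1 L2) : a x - d ≤ lam := by
  obtain ⟨φ, -, hφpos, hsuper⟩ := hlam
  have hφx := hφpos x (Ioo_subset_Icc_self hx)
  have hK : 0 ≤ d * ∫ y in L1..L2, J (x - y) * φ y := by
    rw [intervalIntegral_eq_kernelOp hL]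
    exact mul_nonneg hd (kernelOp_nonneg hJ (fun y hy => (hφpos y hy).le) x)
  have h := hsuper x hx
  exact le_of_mul_le_mul_right (by linarith) hφx

theorem bddBelow_admissibleSet (hJ : KernelJ J) (hL : L1 < L2) (hd : 0 ≤ d) :
    BddBelow (admissibleSet J L1 L2 d a) :=
  ⟨a ((L1 + L2) / 2) - d, fun _ hlam =>
    sub_le_of_mem_admissibleSet hJ hL.le hd hlam ⟨by linarith, by linarith⟩⟩

theorem mem_admissibleSet_of_le (hJ : KernelJ J) (hL : L1 ≤ L2) (hd : 0 ≤ d) {m : ℝ}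
    (ha : ∀ x ∈ Ioo L1 L2, a x ≤ m) : m ∈ admissibleSet J L1 L2 d a := by
  refine ⟨fun _ => 1, continuousOn_const, fun _ _ => one_pos, fun x hx => ?_⟩
  have hK : d * ∫ y in L1..L2, J (x - y) * 1 ≤ d := by
    rw [intervalIntegral_eq_kernelOp hL (fun _ => 1)]
    exact mul_le_of_le_one_right hd (kernelOp_one_le hJ x)
  linarith [ha x hx]

theorem exists_continuous_supersolution (hJ : KernelJ J) (hL : L1 < L2) (ha : Continuous a)
    (hlam : lam ∈ admissibleSet J L1 L2 d a) :
    ∃ ψ : ℝ → ℝ, Continuous ψ ∧ (∀ x, 0 < ψ x) ∧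
      ∀ x ∈ Icc L1 L2, d * kernelOp J L1 L2 ψ x ≤ (lam + d - a x) * ψ x := by
  obtain ⟨φ, hφ, hφpos, hsuper⟩ := hlam
  set ψ := IccExtend hL.le ((Icc L1 L2).domRestrict φ)
  have hψφ : EqOn ψ φ (Icc L1 L2) := fun x hx => IccExtend_of_mem _ _ hx
  have hψ : Continuous ψ := Continuous.Icc_extend' hφ.domRestrict
  refine ⟨ψ, hψ, fun x => hφpos _ (projIcc L1 L2 hL.le x).2, ?_⟩
  have hclosed : IsClosed {x | d * kernelOp J L1 L2 ψ x ≤ (lam + d - a x) * ψ x} :=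
    isClosed_le (continuous_const.mul (continuous_kernelOp hJ hψ))
      ((continuous_const.sub ha).mul hψ)
  rw [← closure_Ioo hL.ne]
  refine closure_minimal (fun x hx => ?_) hclosed
  have h := hsuper x hx
  rw [intervalIntegral_eq_kernelOp hL.le, ← kernelOp_congr hψφ,
    ← hψφ (Ioo_subset_Icc_self hx)] at h
  change d * kernelOp J L1 L2 ψ x ≤ (lam + d - a x) * ψ x
  linarith

theorem kernelForm_self_le_of_mem_admissibleSet (hJ : KernelJ J) (hL : L1 < L2)
    (ha : Continuous a) (hd : 0 < d) (hlam : lam ∈ admissibleSet J L1 L2 d a) {u : ℝ → ℝ}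
    (hu : Continuous u) :
    d * kernelForm J L1 L2 u u ≤ ∫ x in Icc L1 L2, (lam + d - a x) * u x ^ 2 := by
  obtain ⟨ψ, hψ, hψpos, hsuper⟩ := exists_continuous_supersolution hJ hL ha hlam
  have h := kernelForm_self_le_of_kernelOp_le (c := fun x => (lam + d - a x) / d) hJ hψ hψpos
    ((continuous_const.sub ha).div_const d) (fun x hx => by
      rw [div_mul_eq_mul_div, le_div_iff₀ hd, mul_comm]
      exact hsuper x hx) hu
  calc d * kernelForm J L1 L2 u u ≤ d * ∫ x in Icc L1 L2, (lam + d - a x) / d * u x ^ 2 :=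
        mul_le_mul_of_nonneg_left h hd.le
    _ = ∫ x in Icc L1 L2, (lam + d - a x) * u x ^ 2 := by
        rw [← integral_const_mul]
        refine setIntegral_congr_fun measurableSet_Icc fun x _ => ?_
        field_simp

end Admissible

def weightedSq (L1 L2 : ℝ) (w v : ℝ → ℝ) : ℝ := ∫ x in Icc L1 L2, w x * v x ^ 2

def neumannOp (J : ℝ → ℝ) (L1 L2 d : ℝ) (w v : ℝ → ℝ) (x : ℝ) : ℝ :=
  d * kernelOp J L1 L2 v x / w x

section WeightedSq

variable {L1 L2 : ℝ} {w u v : ℝ → ℝ}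

theorem weightedSq_nonneg (hw : ∀ x ∈ Icc L1 L2, 0 ≤ w x) (v : ℝ → ℝ) :
    0 ≤ weightedSq L1 L2 w v :=
  setIntegral_nonneg measurableSet_Icc fun x hx => mul_nonneg (hw x hx) (sq_nonneg _)

theorem weightedSq_const_mul (t : ℝ) (v : ℝ → ℝ) :
    weightedSq L1 L2 w (fun x => t * v x) = t ^ 2 * weightedSq L1 L2 w v := by
  rw [weightedSq, weightedSq, ← integral_const_mul]
  congr 1 with x
  ring

theorem weightedSq_add_add_weightedSq_sub (hw : Continuous w) (hu : Continuous u)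
    (hv : Continuous v) :
    weightedSq L1 L2 w (fun x => u x + v x) + weightedSq L1 L2 w (fun x => u x - v x)
      = 2 * (weightedSq L1 L2 w u + weightedSq L1 L2 w v) := by
  have hint : ∀ f : ℝ → ℝ, Continuous f → IntegrableOn (fun x => w x * f x ^ 2) (Icc L1 L2) :=
    fun f hf => (hw.mul (hf.pow 2)).integrableOn_Icc
  rw [weightedSq, weightedSq, weightedSq, weightedSq,
    ← integral_add (hint (fun x => u x + v x) (hu.add hv)) (hint (fun x => u x - v x) (hu.sub hv)),
    ← integral_add (hint u hu) (hint v hv), ← integral_const_mul]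
  congr 1 with x
  ring

end WeightedSq

section Neumann

variable {J : ℝ → ℝ} {L1 L2 d q η : ℝ} {w u v : ℝ → ℝ}

theorem two_mul_kernelForm_le (hJ : KernelJ J) (hw : Continuous w) (hd : 0 ≤ d)
    (hQ : ∀ v, Continuous v → d * |kernelForm J L1 L2 v v| ≤ q * weightedSq L1 L2 w v)
    (hu : Continuous u) (hv : Continuous v) :
    2 * (d * kernelForm J L1 L2 u v) ≤ q * (weightedSq L1 L2 w u + weightedSq L1 L2 w v) := by
  have hadd := hQ (fun x => u x + v x) (hu.add hv)
  have hsub := hQ (fun x => u x - v x) (hu.sub hv)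
  have hpolar := kernelForm_add_self_sub_kernelForm_sub_self (L1 := L1) (L2 := L2) hJ hu hv
  have hpar := weightedSq_add_add_weightedSq_sub (L1 := L1) (L2 := L2) hw hu hv
  have h1 := le_abs_self (kernelForm J L1 L2 (fun x => u x + v x) (fun x => u x + v x))
  have h2 := neg_abs_le (kernelForm J L1 L2 (fun x => u x - v x) (fun x => u x - v x))
  have h1' := mul_le_mul_of_nonneg_left h1 hd
  have h2' := mul_le_mul_of_nonneg_left h2 hd
  calc 2 * (d * kernelForm J L1 L2 u v)
      = (d * kernelForm J L1 L2 (fun x => u x + v x) (fun x => u x + v x)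
        - d * kernelForm J L1 L2 (fun x => u x - v x) (fun x => u x - v x)) / 2 := by
        rw [← mul_sub, hpolar]; ring
    _ ≤ (q * weightedSq L1 L2 w (fun x => u x + v x)
        + q * weightedSq L1 L2 w (fun x => u x - v x)) / 2 := by linarith
    _ = q * (weightedSq L1 L2 w u + weightedSq L1 L2 w v) := by rw [← mul_add, hpar]; ring

theorem continuous_neumannOp (hJ : KernelJ J) (hw : Continuous w) (hwpos : ∀ x, 0 < w x)
    (hv : Continuous v) : Continuous (neumannOp J L1 L2 d w v) :=
  (continuous_const.mul (continuous_kernelOp hJ hv)).div hw fun x => (hwpos x).ne'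

theorem neumannOp_nonneg (hJ : KernelJ J) (hd : 0 ≤ d) (hwpos : ∀ x, 0 < w x)
    (hv : ∀ y, 0 ≤ v y) (x : ℝ) : 0 ≤ neumannOp J L1 L2 d w v x :=
  div_nonneg (mul_nonneg hd (kernelOp_nonneg hJ (fun y _ => hv y) x)) (hwpos x).le

theorem mul_neumannOp (hwpos : ∀ x, 0 < w x) (v : ℝ → ℝ) (x : ℝ) :
    w x * neumannOp J L1 L2 d w v x = d * kernelOp J L1 L2 v x :=
  mul_div_cancel₀ _ (hwpos x).ne'

theorem weightedSq_neumannOp_le (hJ : KernelJ J) (hw : Continuous w) (hwpos : ∀ x, 0 < w x)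
    (hd : 0 ≤ d) (hq : 0 ≤ q)
    (hQ : ∀ v, Continuous v → d * |kernelForm J L1 L2 v v| ≤ q * weightedSq L1 L2 w v)
    (hv : Continuous v) :
    weightedSq L1 L2 w (neumannOp J L1 L2 d w v) ≤ q ^ 2 * weightedSq L1 L2 w v := by
  set T := neumannOp J L1 L2 d w v
  have hT : Continuous T := continuous_neumannOp hJ hw hwpos hv
  have hself : weightedSq L1 L2 w T = d * kernelForm J L1 L2 T v := by
    rw [weightedSq, kernelForm, ← integral_const_mul]
    congr 1 with x
    rw [sq, ← mul_assoc, mul_neumannOp hwpos]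
    ring
  have hscaled : ∀ t, 2 * t * weightedSq L1 L2 w T
      ≤ q * (t ^ 2 * weightedSq L1 L2 w T + weightedSq L1 L2 w v) := fun t => by
    have h := two_mul_kernelForm_le (u := fun x => t * T x) hJ hw hd hQ
      (continuous_const.mul hT) hv
    rw [kernelForm_const_mul, weightedSq_const_mul] at h
    have hlhs : 2 * t * weightedSq L1 L2 w T = 2 * (d * (t * kernelForm J L1 L2 T v)) := by
      rw [hself]; ring
    linarith
  have hP := weightedSq_nonneg (L1 := L1) (L2 := L2) (fun x _ => (hwpos x).le) v
  rcases hq.eq_or_lt with rfl | hqpos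
  · linarith [hscaled 1]
  · -- the optimal scaling `t = 1 / q`
    have h := hscaled q⁻¹
    field_simp at h
    nlinarith

variable (J L1 L2 d w) in
def neumannTerm (n : ℕ) : ℝ → ℝ := (neumannOp J L1 L2 d w)^[n] fun _ => 1

end Neumann

section NeumannSeries

variable {J : ℝ → ℝ} {L1 L2 d q η : ℝ} {w v : ℝ → ℝ}

theorem integral_abs_le_sqrt_weightedSq (hL : L1 ≤ L2) (hη : 0 < η)
    (hwη : ∀ x ∈ Icc L1 L2, η ≤ w x) (hw : Continuous w) (hv : Continuous v) :
    ∫ x in Icc L1 L2, |v x| ≤ √((L2 - L1) / η * weightedSq L1 L2 w v) := by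
  have hCS := integral_mul_sq_le (μ := volume.restrict (Icc L1 L2)) (f := fun _ => 1)
    (g := fun x => |v x|) continuous_const.integrableOn_Icc (hv.abs.pow 2).integrableOn_Icc
    (continuous_const.mul hv.abs).integrableOn_Icc
  simp only [one_pow, one_mul, sq_abs, setIntegral_const, smul_eq_mul, mul_one,
    Real.volume_real_Icc_of_le hL] at hCS
  have hsq : η * ∫ x in Icc L1 L2, v x ^ 2 ≤ weightedSq L1 L2 w v := by
    rw [← integral_const_mul]
    exact setIntegral_mono_on (continuous_const.mul (hv.pow 2)).integrableOn_Icc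
      (hw.mul (hv.pow 2)).integrableOn_Icc measurableSet_Icc
      fun x hx => mul_le_mul_of_nonneg_right (hwη x hx) (sq_nonneg _)
  refine Real.le_sqrt_of_sq_le (hCS.trans ?_)
  rw [div_mul_eq_mul_div, le_div_iff₀ hη, mul_assoc]
  exact mul_le_mul_of_nonneg_left (by linarith) (by linarith)

theorem abs_neumannOp_le {C : ℝ} (hJ : KernelJ J) (hC : ∀ z, J z ≤ C) (hd : 0 ≤ d)
    (hη : 0 < η) (hwη : ∀ x, η ≤ w x) (hv : Continuous v) (x : ℝ) :
    |neumannOp J L1 L2 d w v x| ≤ d * C / η * ∫ y in Icc L1 L2, |v y| := by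
  have hK := (abs_kernelOp_le hJ v x).trans (kernelOp_abs_le (L1 := L1) (L2 := L2) hJ hC hv x)
  rw [neumannOp, abs_div, abs_mul, abs_of_nonneg hd, abs_of_pos (hη.trans_le (hwη x))]
  calc d * |kernelOp J L1 L2 v x| / w x ≤ d * |kernelOp J L1 L2 v x| / η :=
        div_le_div_of_nonneg_left (by positivity) hη (hwη x)
    _ ≤ d * (C * ∫ y in Icc L1 L2, |v y|) / η := by gcongr
    _ = d * C / η * ∫ y in Icc L1 L2, |v y| := by ring

theorem neumannTerm_succ (n : ℕ) :
    neumannTerm J L1 L2 d w (n + 1) = neumannOp J L1 L2 d w (neumannTerm J L1 L2 d w n) :=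
  Function.iterate_succ_apply' _ _ _

theorem continuous_neumannTerm (hJ : KernelJ J) (hw : Continuous w) (hwpos : ∀ x, 0 < w x)
    (n : ℕ) : Continuous (neumannTerm J L1 L2 d w n) := by
  induction n with
  | zero => exact continuous_const
  | succ n ih => rw [neumannTerm_succ]; exact continuous_neumannOp hJ hw hwpos ih

theorem neumannTerm_nonneg (hJ : KernelJ J) (hd : 0 ≤ d) (hwpos : ∀ x, 0 < w x) (n : ℕ)
    (x : ℝ) : 0 ≤ neumannTerm J L1 L2 d w n x := by
  induction n generalizing x with
  | zero => exact zero_le_one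
  | succ n ih => rw [neumannTerm_succ]; exact neumannOp_nonneg hJ hd hwpos ih x

theorem integral_abs_neumannTerm_le (hJ : KernelJ J) (hL : L1 ≤ L2) (hw : Continuous w)
    (hη : 0 < η) (hwη : ∀ x, η ≤ w x) (hd : 0 ≤ d) (hq : 0 ≤ q)
    (hQ : ∀ v, Continuous v → d * |kernelForm J L1 L2 v v| ≤ q * weightedSq L1 L2 w v) (n : ℕ) :
    ∫ x in Icc L1 L2, |neumannTerm J L1 L2 d w n x|
      ≤ √((L2 - L1) / η * weightedSq L1 L2 w (fun _ => 1)) * q ^ n := by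
  have hwpos : ∀ x, 0 < w x := fun x => hη.trans_le (hwη x)
  have hdecay : ∀ n, weightedSq L1 L2 w (neumannTerm J L1 L2 d w n)
      ≤ (q ^ n) ^ 2 * weightedSq L1 L2 w (fun _ => 1) := fun n => by
    induction n with
    | zero => simp [neumannTerm]
    | succ n ih =>
      rw [neumannTerm_succ, show (q ^ (n + 1)) ^ 2 = q ^ 2 * (q ^ n) ^ 2 by ring, mul_assoc]
      exact (weightedSq_neumannOp_le hJ hw hwpos hd hq hQ
        (continuous_neumannTerm hJ hw hwpos n)).trans (mul_le_mul_of_nonneg_left ih (sq_nonneg q))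
  calc ∫ x in Icc L1 L2, |neumannTerm J L1 L2 d w n x|
      ≤ √((L2 - L1) / η * weightedSq L1 L2 w (neumannTerm J L1 L2 d w n)) :=
        integral_abs_le_sqrt_weightedSq hL hη (fun x _ => hwη x) hw
          (continuous_neumannTerm hJ hw hwpos n)
    _ ≤ √((L2 - L1) / η * ((q ^ n) ^ 2 * weightedSq L1 L2 w (fun _ => 1))) := by
        gcongr
        exact hdecay n
    _ = √((L2 - L1) / η * weightedSq L1 L2 w (fun _ => 1)) * q ^ n := by
        rw [mul_left_comm, Real.sqrt_mul (by positivity), Real.sqrt_sq (by positivity), mul_comm]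

theorem kernelOp_tsum (hJ : KernelJ J) {g : ℕ → ℝ → ℝ} (hg : ∀ n, Continuous (g n))
    {b : ℕ → ℝ} (hb : Summable b) (hgb : ∀ n, ∫ y in Icc L1 L2, |g n y| ≤ b n) (x : ℝ) :
    kernelOp J L1 L2 (fun y => ∑' n, g n y) x = ∑' n, kernelOp J L1 L2 (g n) x := by
  obtain ⟨C, hC⟩ := hJ.exists_le
  have hC0 : 0 ≤ C := (hJ.nonneg 0).trans (hC 0)
  have hnorm : ∀ n, ∫ y in Icc L1 L2, ‖J (x - y) * g n y‖ ≤ C * b n := fun n => by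
    simp only [Real.norm_eq_abs, abs_mul, abs_of_nonneg (hJ.nonneg _)]
    exact (kernelOp_abs_le hJ hC (hg n) x).trans (mul_le_mul_of_nonneg_left (hgb n) hC0)
  simp only [kernelOp, ← tsum_mul_left]
  exact (integral_tsum_of_summable_integral_norm (fun n => integrableOn_kernel_mul hJ (hg n) x)
    ((hb.mul_left C).of_nonneg_of_le (fun n => integral_nonneg fun _ => norm_nonneg _) hnorm)).symm

/-- `φ = ∑ Tⁿ 1` with `T = neumannOp`; the series converges because, by polarization of `hQ`,
`T` contracts the weighted norm by the factor `q`. -/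
theorem exists_neumann_solution (hJ : KernelJ J) (hL : L1 ≤ L2) (hw : Continuous w)
    (hη : 0 < η) (hwη : ∀ x, η ≤ w x) (hd : 0 ≤ d) (hq0 : 0 ≤ q) (hq1 : q < 1)
    (hQ : ∀ v, Continuous v → d * |kernelForm J L1 L2 v v| ≤ q * weightedSq L1 L2 w v) :
    ∃ φ : ℝ → ℝ, Continuous φ ∧ (∀ x, 1 ≤ φ x) ∧
      ∀ x, w x * φ x = w x + d * kernelOp J L1 L2 φ x := by
  obtain ⟨C, hC⟩ := hJ.exists_le
  have hwpos : ∀ x, 0 < w x := fun x => hη.trans_le (hwη x)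
  set g := neumannTerm J L1 L2 d w
  have hg : ∀ n, Continuous (g n) := continuous_neumannTerm hJ hw hwpos
  have hsucc : ∀ n, g (n + 1) = neumannOp J L1 L2 d w (g n) := neumannTerm_succ
  set A := √((L2 - L1) / η * weightedSq L1 L2 w (fun _ => 1))
  have hgeom : Summable fun n : ℕ => A * q ^ n :=
    (summable_geometric_of_lt_one hq0 hq1).mul_left A
  have hsup : ∀ n x, ‖g (n + 1) x‖ ≤ d * C / η * (A * q ^ n) := fun n x => by
    rw [Real.norm_eq_abs, hsucc]
    exact (abs_neumannOp_le hJ hC hd hη hwη (hg n) x).trans (mul_le_mul_of_nonneg_left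
      (integral_abs_neumannTerm_le hJ hL hw hη hwη hd hq0 hQ n)
      (div_nonneg (mul_nonneg hd ((hJ.nonneg 0).trans (hC 0))) hη.le))
  have hsplit : ∀ x, ∑' n, g n x = 1 + ∑' n, g (n + 1) x := fun x =>
    ((summable_nat_add_iff 1).1 ((hgeom.mul_left _).of_norm_bounded (hsup · x))).tsum_eq_zero_add
  refine ⟨fun x => ∑' n, g n x, ?_, fun x => ?_, fun x => ?_⟩
  · rw [funext hsplit]
    exact continuous_const.add (continuous_tsum (fun n => hg (n + 1)) (hgeom.mul_left _) hsup)
  · beta_reduce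
    rw [hsplit x, le_add_iff_nonneg_right]
    exact tsum_nonneg fun n => neumannTerm_nonneg hJ hd hwpos _ x
  · beta_reduce
    rw [kernelOp_tsum hJ hg hgeom (integral_abs_neumannTerm_le hJ hL hw hη hwη hd hq0 hQ),
      hsplit x, mul_add, mul_one, ← tsum_mul_left, ← tsum_mul_left]
    simp only [hsucc, mul_neumannOp hwpos]

end NeumannSeries

section Comparison

variable {J : ℝ → ℝ} {L1 L2 d m : ℝ} {a : ℝ → ℝ}

theorem mul_abs_kernelForm_le_weightedSq (hJ : KernelJ J) {c w : ℝ → ℝ} {q : ℝ} (hd : 0 ≤ d)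
    (hc : Continuous c) (hw : Continuous w) (hcw : ∀ x ∈ Icc L1 L2, c x ≤ q * w x)
    (hQ : ∀ v, Continuous v → d * kernelForm J L1 L2 v v ≤ ∫ x in Icc L1 L2, c x * v x ^ 2)
    {v : ℝ → ℝ} (hv : Continuous v) :
    d * |kernelForm J L1 L2 v v| ≤ q * weightedSq L1 L2 w v := calc
  d * |kernelForm J L1 L2 v v| ≤ d * kernelForm J L1 L2 (fun x => |v x|) (fun x => |v x|) :=
    mul_le_mul_of_nonneg_left (abs_kernelForm_self_le hJ hv) hd
  _ ≤ ∫ x in Icc L1 L2, c x * v x ^ 2 := by simpa only [sq_abs] using hQ _ hv.abs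
  _ ≤ q * weightedSq L1 L2 w v := by
    rw [weightedSq, ← integral_const_mul]
    refine setIntegral_mono_on (hc.mul (hv.pow 2)).integrableOn_Icc
      (continuous_const.mul (hw.mul (hv.pow 2))).integrableOn_Icc measurableSet_Icc
      fun x hx => ?_
    rw [← mul_assoc]
    exact mul_le_mul_of_nonneg_right (hcw x hx) (sq_nonneg _)

theorem sub_mem_admissibleSet_of_eq (hL : L1 ≤ L2) {μ : ℝ} (haμ : ∀ x ∈ Icc L1 L2, a x ≤ μ)
    {φ : ℝ → ℝ} (hφ : Continuous φ) (hφ1 : ∀ x, 1 ≤ φ x)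
    (hφeq : ∀ x ∈ Icc L1 L2, (μ - a x) * φ x = (μ - a x) + d * kernelOp J L1 L2 φ x) :
    μ - d ∈ admissibleSet J L1 L2 d a := by
  refine ⟨φ, hφ.continuousOn, fun x _ => one_pos.trans_le (hφ1 x), fun x hx => ?_⟩
  have hxI := Ioo_subset_Icc_self hx
  have h := hφeq x hxI
  rw [intervalIntegral_eq_kernelOp hL]
  nlinarith [haμ x hxI, hφ1 x]

/-- The test function for the level `m + ε - d` is the Neumann series for the weight
`m + ε - a`, contracting with ratio `(m - min a) / (m + ε - min a)`. -/
theorem lambdaP_le_of_kernelForm_le (hJ : KernelJ J) (hL : L1 < L2) (ha : Continuous a)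
    (hd : 0 < d) (ham : ∀ x ∈ Icc L1 L2, a x ≤ m)
    (hQ : ∀ v, Continuous v →
      d * kernelForm J L1 L2 v v ≤ ∫ x in Icc L1 L2, (m - a x) * v x ^ 2) :
    lambdaP J L1 L2 d a ≤ m - d := by
  obtain ⟨x1, hx1, hmin⟩ := isCompact_Icc.exists_isMinOn (nonempty_Icc.2 hL.le) ha.continuousOn
  refine le_of_forall_pos_le_add fun ε hε => ?_
  set w : ℝ → ℝ := fun x => max (m + ε - a x) ε
  have hw : Continuous w := (continuous_const.sub ha).max continuous_const
  set q := (m - a x1) / (m + ε - a x1)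
  have hma : 0 ≤ m - a x1 := sub_nonneg.2 (ham x1 hx1)
  have hq0 : 0 ≤ q := div_nonneg hma (by linarith)
  have hq1 : q < 1 := (div_lt_one (by linarith)).2 (by linarith)
  have hwIcc : ∀ x ∈ Icc L1 L2, w x = m + ε - a x := fun x hx =>
    max_eq_left (by linarith [ham x hx])
  have hqw : ∀ x ∈ Icc L1 L2, m - a x ≤ q * w x := fun x hx => by
    have hx1x : a x1 ≤ a x := hmin hx
    rw [hwIcc x hx, div_mul_eq_mul_div, le_div_iff₀ (by linarith)]
    nlinarith
  obtain ⟨φ, hφ, hφ1, hφeq⟩ := exists_neumann_solution hJ hL.le hw hε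
    (fun x => le_max_right _ _) hd.le hq0 hq1
    fun v hv => mul_abs_kernelForm_le_weightedSq hJ hd.le (continuous_const.sub ha) hw hqw hQ hv
  have hmem : m + ε - d ∈ admissibleSet J L1 L2 d a :=
    sub_mem_admissibleSet_of_eq hL.le (fun x hx => by linarith [ham x hx]) hφ hφ1
      fun x hx => by rw [← hwIcc x hx]; exact hφeq x
  calc lambdaP J L1 L2 d a ≤ m + ε - d := by
        rw [lambdaP_eq_sInf]
        exact csInf_le (bddBelow_admissibleSet hJ hL hd.le) hmem
    _ = m - d + ε := by ring

theorem lambdaP_le_max_of_mem_admissibleSet (hJ : KernelJ J) (hL : L1 < L2) (ha : Continuous a)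
    {M : ℝ} (haM : ∀ x ∈ Icc L1 L2, a x ≤ M) {k : ℝ}
    (hk : ∀ f : ℝ → ℝ, Continuous f → kernelForm J L1 L2 f f ≤ k * ∫ x in Icc L1 L2, f x ^ 2)
    {d1 d2 lam : ℝ} (hd2 : 0 < d2) (hd12 : d2 ≤ d1) (hlam : lam ∈ admissibleSet J L1 L2 d2 a) :
    lambdaP J L1 L2 d1 a ≤ max (lam - (d1 - d2) * (1 - k)) (M - d1) := by
  set m := max (lam + d2 + (d1 - d2) * k) M
  have hle := lambdaP_le_of_kernelForm_le (m := m) hJ hL ha (hd2.trans_le hd12)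
    (fun x hx => (haM x hx).trans (le_max_right _ _)) fun v hv => ?_
  · refine hle.trans_eq ?_
    rw [show lam - (d1 - d2) * (1 - k) = lam + d2 + (d1 - d2) * k - d1 by ring,
      max_sub_sub_right]
  · have hint : ∀ c : ℝ → ℝ, Continuous c → IntegrableOn (fun x => c x * v x ^ 2) (Icc L1 L2) :=
      fun c hc => (hc.mul (hv.pow 2)).integrableOn_Icc
    have hd2Q := kernelForm_self_le_of_mem_admissibleSet hJ hL ha hd2 hlam hv
    have hkQ := mul_le_mul_of_nonneg_left (hk v hv) (sub_nonneg.2 hd12)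
    calc d1 * kernelForm J L1 L2 v v
        = d2 * kernelForm J L1 L2 v v + (d1 - d2) * kernelForm J L1 L2 v v := by ring
      _ ≤ (∫ x in Icc L1 L2, (lam + d2 - a x) * v x ^ 2)
          + ∫ x in Icc L1 L2, (d1 - d2) * k * v x ^ 2 := by
        rw [integral_const_mul]
        linarith
      _ = ∫ x in Icc L1 L2, (lam + d2 + (d1 - d2) * k - a x) * v x ^ 2 := by
        rw [← integral_add (hint (fun x => lam + d2 - a x) (continuous_const.sub ha))
          (hint _ continuous_const)]
        congr 1 with x
        ring
      _ ≤ ∫ x in Icc L1 L2, (m - a x) * v x ^ 2 :=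
        setIntegral_mono_on (hint (fun x => lam + d2 + (d1 - d2) * k - a x)
          (continuous_const.sub ha)) (hint (fun x => m - a x) (continuous_const.sub ha))
          measurableSet_Icc fun x _ => mul_le_mul_of_nonneg_right
            (sub_le_sub_right (le_max_left _ _) _) (sq_nonneg _)

end Comparison

end NonlocalDispersal

open NonlocalDispersal

/-- Theorem 3.4 (i): `λ_p((L1,L2), d, a)` is strictly decreasing in the diffusion
rate `d`. -/
theorem lambdaP_strictAnti_in_d
    (J : ℝ → ℝ) (L1 L2 d1 d2 : ℝ) (a : ℝ → ℝ)
    (hJ : KernelJ J) (hL : L1 < L2)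
    (haL : ∃ K, LipschitzWith K a)
    (haH : ∃ x0 ∈ Ioo L1 L2, ∀ x ∈ Icc L1 L2, a x ≤ a x0)
    (hd2 : 0 < d2) (hd12 : d2 < d1) :
    lambdaP J L1 L2 d1 a < lambdaP J L1 L2 d2 a := by
  obtain ⟨K, hK⟩ := haL
  obtain ⟨x0, hx0, hmax⟩ := haH
  obtain ⟨k, hk1, hk⟩ := exists_kernelForm_self_le (L1 := L1) (L2 := L2) hJ
  have hne : (admissibleSet J L1 L2 d2 a).Nonempty :=
    ⟨a x0, mem_admissibleSet_of_le hJ hL.le hd2.le fun x hx => hmax x (Ioo_subset_Icc_self hx)⟩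
  have hlower : a x0 - d2 ≤ lambdaP J L1 L2 d2 a := by
    rw [lambdaP_eq_sInf]
    exact le_csInf hne fun _ hlam => sub_le_of_mem_admissibleSet hJ hL.le hd2.le hlam hx0
  have hgap : 0 < (d1 - d2) * (1 - k) := mul_pos (by linarith) (by linarith)
  by_cases hcase : lambdaP J L1 L2 d1 a ≤ a x0 - d1
  · linarith
  · have hshift : lambdaP J L1 L2 d1 a + (d1 - d2) * (1 - k) ≤ lambdaP J L1 L2 d2 a := by
      rw [lambdaP_eq_sInf J L1 L2 d2]
      refine le_csInf hne fun lam hlam => ?_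
      have h := lambdaP_le_max_of_mem_admissibleSet hJ hL hK.continuous hmax hk hd2 hd12.le hlam
      rw [le_max_iff] at h
      rcases h with h | h <;> linarith
    linarith
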